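/- arXiv:math/0611390 — 2 statements merged into one kernel-verified Lean document; each statement's English description precedes it below -/
import Mathlib

section
/- Let g : ℂ³ → ℂ be the map g(z₁,z₂,z₃) = z₁·conj(z₂) + z₁z₃ + conj(z₂)·z₃ (which is smooth as a map of real vector spaces but not holomorphic). Then: (a) the real Fréchet derivative fderiv ℝ g z vanishes if and only if z = 0; and (b) for every z ≠ 0, the ℝ-linear map fderiv ℝ g z : ℂ³ → ℂ is surjective. In particular every nonzero point of the zero set V = g⁻¹(0) is a regular point of g, so V ∖ {0} is cut out transversally. -/
/-!
Write `g = σ₂ ∘ e`, where `σ₂(w) = w₀w₁ + w₀w₂ + w₁w₂` is holomorphic and `e` conjugates the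
middle coordinate. Since `e` is an `ℝ`-linear isomorphism, the chain rule makes the real
derivative of `g` at `z` the complex derivative of `σ₂` at `e z`, precomposed with `e`. That
derivative is a `ℂ`-linear functional, so it is surjective as soon as it is nonzero, and its
coefficients `(w₁ + w₂, w₀ + w₂, w₀ + w₁)` form an invertible linear function of `w`: the Morse
singularity of `σ₂` at `0` is its only critical point.
-/

open Function ComplexConjugate

section RestrictScalars

variable {𝕜 𝕜' : Type*} [NontriviallyNormedField 𝕜] [NontriviallyNormedField 𝕜']
  [NormedAlgebra 𝕜 𝕜']
  {E : Type*} [NormedAddCommGroup E] [NormedSpace 𝕜 E] [NormedSpace 𝕜' E] [IsScalarTower 𝕜 𝕜' E]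
  {F : Type*} [NormedAddCommGroup F] [NormedSpace 𝕜 F]

theorem fderiv_comp_continuousLinearEquiv {q : E → 𝕜'} (e : F ≃L[𝕜] E) {z : F}
    (hq : DifferentiableAt 𝕜' q (e z)) :
    fderiv 𝕜 (q ∘ e) z = (fderiv 𝕜' q (e z)).restrictScalars 𝕜 ∘L (e : F →L[𝕜] E) :=
  ((hq.hasFDerivAt.restrictScalars 𝕜).comp z e.hasFDerivAt).fderiv

theorem restrictScalars_comp_continuousLinearEquiv_eq_zero_iff (L : E →L[𝕜'] 𝕜')
    (e : F ≃L[𝕜] E) : L.restrictScalars 𝕜 ∘L (e : F →L[𝕜] E) = 0 ↔ L = 0 := by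
  refine ⟨fun h => ?_, fun h => by simp [h]⟩
  ext x
  simpa using congr($h (e.symm x))

theorem surjective_restrictScalars_comp_continuousLinearEquiv {L : E →L[𝕜'] 𝕜'} (hL : L ≠ 0)
    (e : F ≃L[𝕜] E) : Surjective (L.restrictScalars 𝕜 ∘L (e : F →L[𝕜] E)) :=
  (LinearMap.surjective (ContinuousLinearMap.coe_injective.ne hL)).comp e.surjective

end RestrictScalars

noncomputable def conjCoord {ι : Type*} [DecidableEq ι] (i : ι) : (ι → ℂ) ≃L[ℝ] (ι → ℂ) :=
  ContinuousLinearEquiv.piCongrRight fun j => if j = i then Complex.conjCLE else .refl ℝ ℂ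

theorem conjCoord_apply {ι : Type*} [DecidableEq ι] (i : ι) (z : ι → ℂ) (j : ι) :
    conjCoord i z j = if j = i then conj (z j) else z j := by
  unfold conjCoord
  split_ifs <;> simp [*]

def sigma2 (w : Fin 3 → ℂ) : ℂ := w 0 * w 1 + w 0 * w 2 + w 1 * w 2

theorem differentiable_sigma2 : Differentiable ℂ sigma2 := by
  unfold sigma2
  fun_prop

theorem fderiv_sigma2_apply (w v : Fin 3 → ℂ) :
    fderiv ℂ sigma2 w v = (w 1 + w 2) * v 0 + (w 0 + w 2) * v 1 + (w 0 + w 1) * v 2 := by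
  have hproj (i : Fin 3) := hasFDerivAt_apply (𝕜 := ℂ) (F' := fun _ => ℂ) i w
  have h : HasFDerivAt sigma2 _ w :=
    (((hproj 0).mul (hproj 1)).add ((hproj 0).mul (hproj 2))).add ((hproj 1).mul (hproj 2))
  rw [h.fderiv]
  simp only [add_apply, smul_apply, ContinuousLinearMap.proj_apply, smul_eq_mul]
  ring

theorem fderiv_sigma2_eq_zero_iff (w : Fin 3 → ℂ) : fderiv ℂ sigma2 w = 0 ↔ w = 0 := by
  refine ⟨fun h => ?_, fun h => by ext v; simp [fderiv_sigma2_apply, h]⟩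
  have hcoef (i : Fin 3) := congr($h (Pi.single i 1))
  simp only [fderiv_sigma2_apply, zero_apply] at hcoef
  have h12 : w 1 + w 2 = 0 := by simpa using hcoef 0
  have h02 : w 0 + w 2 = 0 := by simpa using hcoef 1
  have h01 : w 0 + w 1 = 0 := by simpa using hcoef 2
  have h0 : w 0 = 0 := by linear_combination (h01 + h02 - h12) / 2
  have h1 : w 1 = 0 := by linear_combination (h01 + h12 - h02) / 2
  have h2 : w 2 = 0 := by linear_combination (h02 + h12 - h01) / 2
  ext i
  fin_cases i <;> simp [h0, h1, h2]

/-- The real-analytic (non-holomorphic) polynomial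
`g(z₁,z₂,z₃) = z₁·conj z₂ + z₁z₃ + conj z₂ · z₃` has an isolated singularity at
the origin and is a submersion away from it. -/
theorem regularity_of_g
    (g : (Fin 3 → ℂ) → ℂ)
    (hg : ∀ z, g z = z 0 * starRingEnd ℂ (z 1) + z 0 * z 2
      + starRingEnd ℂ (z 1) * z 2) :
    (∀ z : Fin 3 → ℂ, fderiv ℝ g z = 0 ↔ z = 0) ∧
    (∀ z : Fin 3 → ℂ, z ≠ 0 → Function.Surjective (fderiv ℝ g z)) := by
  have hg_eq : g = sigma2 ∘ conjCoord 1 := by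
    funext z
    simp [hg, sigma2, conjCoord_apply]
  have hDg (z : Fin 3 → ℂ) : fderiv ℝ g z = (fderiv ℂ sigma2 (conjCoord 1 z)).restrictScalars ℝ
      ∘L (conjCoord (1 : Fin 3) : _ →L[ℝ] _) := by
    rw [hg_eq]
    exact fderiv_comp_continuousLinearEquiv (conjCoord (1 : Fin 3)) (differentiable_sigma2 _)
  have hcrit (z : Fin 3 → ℂ) : fderiv ℂ sigma2 (conjCoord 1 z) = 0 ↔ z = 0 := by
    rw [fderiv_sigma2_eq_zero_iff, ContinuousLinearEquiv.map_eq_zero_iff]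
  refine ⟨fun z => ?_, fun z hz => ?_⟩
  · rw [hDg, restrictScalars_comp_continuousLinearEquiv_eq_zero_iff, hcrit]
  · rw [hDg]
    exact surjective_restrictScalars_comp_continuousLinearEquiv (mt (hcrit z).mp hz) _
end

section
/- Let f : ℂ² → ℂ be f(z₁,z₂) = z₁·conj(z₂), and let φ : {z : f(z) ≠ 0} → ℂ be φ(w) = f(w)/‖f(w)‖. Then for every z = (z₁,z₂) ∈ ℂ² with z₁ ≠ 0 and z₂ ≠ 0, there exists a vector v ∈ ℂ² which is tangent to the sphere through z, i.e. whose real inner product with z vanishes (Re(conj(z₁)·v₁ + conj(z₂)·v₂) = 0), such that fderiv ℝ φ z v ≠ 0. (For instance v = (i·z₁, 0) works, with fderiv ℝ φ z v = i·φ(z).) In particular the circle-valued map φ = f/|f| has nowhere vanishing derivative along the spheres ‖z‖ = ε off the zero set of f. -/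
open Complex

/-- The Milnor-type map `φ = f/|f|` of `f(z₁,z₂) = z₁·conj z₂` has nonvanishing
derivative in some direction tangent to the sphere, at every point off the zero
set of `f`. -/
theorem milnor_map_submersion_along_spheres
    (f : (Fin 2 → ℂ) → ℂ)
    (hf : ∀ z, f z = z 0 * starRingEnd ℂ (z 1))
    (φ : (Fin 2 → ℂ) → ℂ)
    (hφ : ∀ w, φ w = f w / (‖f w‖ : ℂ)) :
    ∀ z : Fin 2 → ℂ, z 0 ≠ 0 → z 1 ≠ 0 →
      ∃ v : Fin 2 → ℂ,
        (starRingEnd ℂ (z 0) * v 0 + starRingEnd ℂ (z 1) * v 1).re = 0 ∧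
        fderiv ℝ φ z v ≠ 0 := by
  intro z hz0 hz1
  set v : Fin 2 → ℂ := ![Complex.I * z 0, 0] with hv
  have hfz : f z ≠ 0 := by
    rw [hf]; exact mul_ne_zero hz0 (by simpa using hz1)
  have hnormR : ‖f z‖ ≠ 0 := norm_ne_zero_iff.mpr hfz
  have hnorm : (‖f z‖ : ℂ) ≠ 0 := by exact_mod_cast hnormR
  have hφz : φ z ≠ 0 := by rw [hφ]; exact div_ne_zero hfz hnorm
  refine ⟨v, ?_, ?_⟩
  · simp [hv, Complex.mul_re, Complex.mul_im]
    ring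
  · -- differentiability of φ at z
    have hfeq : f = fun w => w 0 * starRingEnd ℂ (w 1) := funext hf
    have hproj0 : DifferentiableAt ℝ (fun w : Fin 2 → ℂ => w 0) z :=
      (ContinuousLinearMap.proj (R := ℝ) (φ := fun _ : Fin 2 => ℂ) 0).differentiableAt
    have hproj1 : DifferentiableAt ℝ (fun w : Fin 2 → ℂ => w 1) z :=
      (ContinuousLinearMap.proj (R := ℝ) (φ := fun _ : Fin 2 => ℂ) 1).differentiableAt
    have hconj : DifferentiableAt ℝ (fun w : Fin 2 → ℂ => starRingEnd ℂ (w 1)) z :=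
      (Complex.conjCLE.differentiable.differentiableAt).comp z hproj1
    have hdf : DifferentiableAt ℝ f z := by rw [hfeq]; exact hproj0.mul hconj
    have hdn : DifferentiableAt ℝ (fun w => ‖f w‖) z := hdf.norm ℝ hfz
    have hdnC : DifferentiableAt ℝ (fun w => (‖f w‖ : ℂ)) z :=
      Complex.ofRealCLM.differentiableAt.comp z hdn
    have hdφ : DifferentiableAt ℝ φ z := by
      have : DifferentiableAt ℝ (fun w => f w / (‖f w‖ : ℂ)) z := by
        simp only [div_eq_mul_inv]
        exact hdf.mul (hdnC.inv hnorm)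
      exact (funext hφ : φ = _) ▸ this
    -- the curve
    have hγ : HasDerivAt (fun t : ℝ => z + t • v) v 0 := by
      have h1 : HasDerivAt (fun t : ℝ => t • v) ((1:ℝ) • v) 0 :=
        (hasDerivAt_id (0:ℝ)).smul_const v
      simpa using h1.const_add z
    have hdφ' : HasFDerivAt φ (fderiv ℝ φ z) (z + (0:ℝ) • v) := by
      simpa using hdφ.hasFDerivAt
    have hcomp : HasDerivAt (fun t : ℝ => φ (z + t • v)) (fderiv ℝ φ z v) 0 :=
      hdφ'.comp_hasDerivAt 0 hγ
    -- explicit formula for φ along the curve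
    have hnorm1 : ∀ t : ℝ, ‖(1:ℂ) + t * Complex.I‖ = Real.sqrt (1 + t ^ 2) := by
      intro t
      rw [Complex.norm_def]
      congr 1
      simp [Complex.normSq_apply]
      ring
    have hkey : (fun t : ℝ => φ (z + t • v)) =
        fun t : ℝ => φ z * ((1:ℂ) + t * Complex.I) / ((Real.sqrt (1 + t ^ 2) : ℂ)) := by
      funext t
      have h0 : (z + t • v) 0 = ((1:ℂ) + t * Complex.I) * z 0 := by
        simp [hv, Complex.real_smul]; ring
      have h1 : (z + t • v) 1 = z 1 := by simp [hv]
      have hfw : f (z + t • v) = ((1:ℂ) + t * Complex.I) * f z := by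
        rw [hf, hf, h0, h1]; ring
      have hsq : (0:ℝ) < 1 + t ^ 2 := by positivity
      have hsqrt : (Real.sqrt (1 + t ^ 2)) ≠ 0 := by positivity
      rw [hφ, hφ, hfw, norm_mul, hnorm1 t]
      push_cast
      field_simp
    -- derivative of the explicit formula
    have hu : HasDerivAt (fun t : ℝ => (1:ℂ) + t * Complex.I) Complex.I 0 := by
      have h1 : HasDerivAt (fun t : ℝ => (t : ℂ)) 1 0 := by
        exact Complex.ofRealCLM.hasDerivAt (x := (0:ℝ))
      simpa using (h1.mul_const Complex.I).const_add (1:ℂ)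
    have hr : HasDerivAt (fun t : ℝ => Real.sqrt (1 + t ^ 2)) 0 0 := by
      have h1 : HasDerivAt (fun t : ℝ => 1 + t ^ 2) 0 0 := by
        simpa using ((hasDerivAt_pow 2 (0:ℝ)).const_add (1:ℝ))
      have := h1.sqrt (by norm_num)
      simpa using this
    have hrc : HasDerivAt (fun t : ℝ => (Real.sqrt (1 + t ^ 2) : ℂ)) 0 0 := by
      simpa using hr.ofReal_comp
    have hne : ((Real.sqrt (1 + (0:ℝ) ^ 2) : ℝ) : ℂ) ≠ 0 := by norm_num
    have hh : HasDerivAt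
        (fun t : ℝ => φ z * ((1:ℂ) + t * Complex.I) / ((Real.sqrt (1 + t ^ 2) : ℂ)))
        (φ z * Complex.I) 0 := by
      have := (hu.const_mul (φ z)).div hrc hne
      simpa [Pi.div_def] using this
    have hfd : fderiv ℝ φ z v = φ z * Complex.I := by
      have hcomp' : HasDerivAt
          (fun t : ℝ => φ z * ((1:ℂ) + t * Complex.I) / ((Real.sqrt (1 + t ^ 2) : ℂ)))
          (fderiv ℝ φ z v) 0 := hkey ▸ hcomp
      exact hcomp'.unique hh
    rw [hfd]
    exact mul_ne_zero hφz Complex.I_ne_zero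
end
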